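/- arXiv:2203.07227 — 7 statements merged into one kernel-verified Lean document; each statement's English description precedes it below -/
import Mathlib

section
/- The sum of the products of the decimal digits of all even numbers from 11...12 (k ones followed by digit 2) up to 99...98 (k nines followed by digit 8) equals 4·5^(k+1)·9^k. -/
/-- Product of the decimal digits of `p`. -/
def digProd (p : ℕ) : ℕ := (Nat.digits 10 p).prod

open Finset

/-- Product of the `n` lowest base-10 digits of `p` (with leading zeros). -/
def P : ℕ → ℕ → ℕ
  | 0, _ => 1
  | n+1, p => p % 10 * P n (p / 10)

lemma sum_range_mul (m : ℕ) (f : ℕ → ℕ) :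
    ∑ p ∈ range (10 * m), f p = ∑ q ∈ range m, ∑ r ∈ range 10, f (10 * q + r) := by
  induction m with
  | zero => simp
  | succ m ih =>
    have h : 10 * (m + 1) = 10 * m + 10 := by ring
    rw [h, Finset.sum_range_add, ih]
    conv_rhs => rw [Finset.sum_range_succ]

lemma sumP (n : ℕ) : ∑ q ∈ range (10 ^ n), P n q = 45 ^ n := by
  induction n with
  | zero => simp [P]
  | succ n ih =>
    rw [pow_succ, mul_comm, sum_range_mul]
    have key : ∀ q ∈ range (10 ^ n), ∑ r ∈ range 10, P (n+1) (10 * q + r) = 45 * P n q := by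
      intro q _
      have h : ∀ r ∈ range 10, P (n+1) (10 * q + r) = r * P n q := by
        intro r hr
        simp only [mem_range] at hr
        have h1 : (10 * q + r) % 10 = r := by omega
        have h2 : (10 * q + r) / 10 = q := by omega
        simp [P, h1, h2]
      rw [Finset.sum_congr rfl h, ← Finset.sum_mul]
      have h45 : (∑ r ∈ Finset.range 10, r) = 45 := by decide
      rw [h45]
    rw [Finset.sum_congr rfl key, ← Finset.mul_sum, ih, pow_succ]
    ring

lemma sumPev (n : ℕ) :
    ∑ p ∈ (range (10 ^ (n+1))).filter (fun p => Even p), P (n+1) p = 20 * 45 ^ n := by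
  rw [Finset.sum_filter, pow_succ, mul_comm, sum_range_mul]
  have key : ∀ q ∈ range (10 ^ n),
      (∑ r ∈ range 10, if Even (10 * q + r) then P (n+1) (10 * q + r) else 0)
       = 20 * P n q := by
    intro q _
    have h : ∀ r ∈ range 10,
        (if Even (10 * q + r) then P (n+1) (10 * q + r) else 0)
        = (if Even r then r else 0) * P n q := by
      intro r hr
      simp only [mem_range] at hr
      have h1 : (10 * q + r) % 10 = r := by omega
      have h2 : (10 * q + r) / 10 = q := by omega
      have he : Even (10 * q) := ⟨5 * q, by ring⟩
      have h3 : Even (10 * q + r) ↔ Even r := by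
        rw [Nat.even_add]
        simp [he]
      simp only [h3]
      by_cases hre : Even r <;> simp [hre, P, h1, h2]
    rw [Finset.sum_congr rfl h, ← Finset.sum_mul]
    have h20 : (∑ r ∈ Finset.range 10, if Even r then r else 0) = 20 := by decide
    rw [h20]
  rw [Finset.sum_congr rfl key, ← Finset.mul_sum, sumP]

lemma digProd_eq (k : ℕ) : ∀ p, 10 ^ k ≤ p → p < 10 ^ (k+1) → digProd p = P (k+1) p := by
  induction k with
  | zero =>
    intro p h1 h2
    simp only [pow_zero, pow_one] at h1 h2
    unfold digProd
    rw [Nat.digits_def' (by norm_num) (by omega)]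
    have h : p / 10 = 0 := by omega
    simp [P, h]
  | succ k ih =>
    intro p h1 h2
    have hp : 0 < p := lt_of_lt_of_le (Nat.pow_pos (by norm_num : (0:ℕ) < 10)) h1
    unfold digProd
    rw [Nat.digits_def' (by norm_num) hp]
    have hd1 : 10 ^ k ≤ p / 10 := by
      rw [Nat.le_div_iff_mul_le (by norm_num)]
      calc 10 ^ k * 10 = 10 ^ (k+1) := by rw [pow_succ]
        _ ≤ p := h1
    have hd2 : p / 10 < 10 ^ (k+1) := by
      rw [Nat.div_lt_iff_lt_mul (by norm_num), ← pow_succ]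
      exact h2
    have heq := ih (p / 10) hd1 hd2
    unfold digProd at heq
    simp [P, heq]

def M (k : ℕ) : ℕ := ∑ i ∈ Finset.Icc 1 k, 10 ^ i

lemma M_succ (k : ℕ) : M (k+1) = M k + 10 ^ (k+1) := by
  unfold M
  rw [Finset.sum_Icc_succ_top (by omega)]

lemma M_closed (k : ℕ) : 9 * M k + 10 = 10 ^ (k+1) := by
  induction k with
  | zero => simp [M]
  | succ k ih =>
    rw [M_succ]
    have h : (10:ℕ) ^ (k+1+1) = 10 ^ (k+1) * 10 := pow_succ _ _
    omega

lemma M_rec (k : ℕ) : M (k+1) = 10 * M k + 10 := by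
  have h1 := M_closed k
  have h2 := M_closed (k+1)
  have h : (10:ℕ) ^ (k+1+1) = 10 ^ (k+1) * 10 := pow_succ _ _
  omega

lemma M_even (k : ℕ) : Even (M k) := by
  cases k with
  | zero => simp [M]
  | succ k =>
    rw [M_rec]
    exact ⟨5 * M k + 5, by ring⟩

lemma M_ge (k : ℕ) : 10 ^ k ≤ M k + 1 := by
  have h1 := M_closed k
  have h : (10:ℕ) ^ (k+1) = 10 ^ k * 10 := pow_succ _ _
  omega

lemma Pzero (k : ℕ) : ∀ p, p ≤ M k → P (k+1) p = 0 := by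
  induction k with
  | zero =>
    intro p hp
    have h0 : M 0 = 0 := by simp [M]
    have : p = 0 := by omega
    subst this
    rfl
  | succ k ih =>
    intro p hp
    rw [M_rec] at hp
    by_cases h : p / 10 ≤ M k
    · have hz := ih (p / 10) h
      show p % 10 * P (k+1) (p / 10) = 0
      rw [hz, mul_zero]
    · have hz : p % 10 = 0 := by omega
      show p % 10 * P (k+1) (p / 10) = 0
      rw [hz, zero_mul]

/-- The sum of the products of the decimal digits of all even numbers from
`11...12` (`k` ones followed by a `2`) up to `99...98` (`k` nines followed by an `8`)
equals `4 * 5^(k+1) * 9^k`. -/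
theorem stmt0 (k : ℕ) :
    ∑ p ∈ (Finset.Icc ((∑ i ∈ Finset.Icc 1 k, 10 ^ i) + 2) (10 ^ (k + 1) - 2)).filter
      (fun p => Even p), digProd p = 4 * 5 ^ (k + 1) * 9 ^ k := by
  have hM : (∑ i ∈ Finset.Icc 1 k, 10 ^ i) = M k := rfl
  have hMe := M_even k
  have hMg := M_ge k
  have h10' : (10:ℕ)^(k+1) = 10 * 10^k := by rw [pow_succ]; ring
  have h10 : (10:ℕ)^k ≥ 1 := Nat.one_le_pow _ _ (by norm_num)
  rw [hM]
  have step1 : ∑ p ∈ (Finset.Icc (M k + 2) (10 ^ (k + 1) - 2)).filter (fun p => Even p),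
      digProd p
      = ∑ p ∈ (Finset.Icc (M k + 2) (10 ^ (k + 1) - 2)).filter (fun p => Even p),
      P (k+1) p := by
    apply Finset.sum_congr rfl
    intro p hp
    simp only [Finset.mem_filter, Finset.mem_Icc] at hp
    exact digProd_eq k p (by omega) (by omega)
  rw [step1]
  have step2 : ∑ p ∈ (range (10 ^ (k+1))).filter (fun p => Even p), P (k+1) p
      = ∑ p ∈ (Finset.Icc (M k + 2) (10 ^ (k + 1) - 2)).filter (fun p => Even p),
      P (k+1) p := by
    apply (Finset.sum_subset _ _).symm
    · apply Finset.filter_subset_filter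
      intro p hp
      simp only [Finset.mem_Icc] at hp
      simp only [Finset.mem_range]
      omega
    · intro p hp hnp
      simp only [Finset.mem_filter, Finset.mem_range] at hp
      simp only [Finset.mem_filter, Finset.mem_Icc] at hnp
      have hle : p ≤ M k := by
        have hn : ¬(M k + 2 ≤ p ∧ p ≤ 10 ^ (k+1) - 2) := fun hc => hnp ⟨hc, hp.2⟩
        rcases hp.2 with ⟨a, ha⟩
        rcases hMe with ⟨b, hb⟩
        have h1 := hp.1
        omega
      exact Pzero k p hle
  rw [← step2, sumPev]
  have h59 : (45:ℕ) = 5 * 9 := by norm_num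
  rw [h59, mul_pow, pow_succ]
  ring
end

section
/- For every k ≥ 0, the sum of the products of the decimal digits of all odd numbers from 11...1 (k+1 ones, i.e., (10^(k+1)-1)/9) up to 99...9 (k+1 nines, i.e., 10^(k+1)-1) equals 5^(k+2)·9^k. -/
/-- Digit product padded to `k+1` digits: zero if `p` has fewer than `k+1` digits. -/
def padProd (k p : ℕ) : ℕ := if 10 ^ k ≤ p then digProd p else 0

lemma nine_dvd (n : ℕ) : 9 ∣ 10 ^ n - 1 := by
  induction n with
  | zero => simp
  | succ n ih =>
    have h1 : (1:ℕ) ≤ 10 ^ n := Nat.one_le_pow _ _ (by norm_num)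
    have h10 : (10:ℕ) ^ (n + 1) = 10 * 10 ^ n := by ring
    omega

lemma rep_succ (n : ℕ) : (10 ^ (n + 1) - 1) / 9 = 10 * ((10 ^ n - 1) / 9) + 1 := by
  obtain ⟨y, hy⟩ := nine_dvd n
  have h1 : (1:ℕ) ≤ 10 ^ n := Nat.one_le_pow _ _ (by norm_num)
  have h10 : (10:ℕ) ^ (n + 1) = 10 * 10 ^ n := by ring
  omega

lemma rep_ge (n : ℕ) : 10 ^ n ≤ (10 ^ (n + 1) - 1) / 9 := by
  have h1 : (1:ℕ) ≤ 10 ^ n := Nat.one_le_pow _ _ (by norm_num)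
  obtain ⟨y, hy⟩ := nine_dvd (n + 1)
  have h10 : (10:ℕ) ^ (n + 1) = 10 * 10 ^ n := by ring
  omega

lemma digProd_cons (p : ℕ) (hp : 0 < p) :
    digProd p = p % 10 * digProd (p / 10) := by
  unfold digProd
  rw [Nat.digits_def' (by norm_num : (1:ℕ) < 10) hp, List.prod_cons]

/-- If the digit product of a nonzero number is nonzero, the number is at least the
repunit with the same number of digits. -/
lemma rep_le_of_digProd_ne_zero : ∀ p : ℕ, p ≠ 0 → digProd p ≠ 0 →
    (10 ^ (Nat.digits 10 p).length - 1) / 9 ≤ p := by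
  intro p
  induction p using Nat.strong_induction_on with
  | _ p ih =>
    intro hp hd
    have hp' : 0 < p := Nat.pos_of_ne_zero hp
    rw [Nat.digits_def' (by norm_num : (1:ℕ) < 10) hp', List.length_cons]
    rw [digProd_cons p hp'] at hd
    have hmod : p % 10 ≠ 0 := fun h => hd (by simp [h])
    have hdq : digProd (p / 10) ≠ 0 := fun h => hd (by simp [h])
    rcases Nat.eq_zero_or_pos (p / 10) with hq | hq
    · rw [hq]
      simp only [Nat.digits_zero, List.length_nil]
      norm_num
      omega
    · have hlt : p / 10 < p := Nat.div_lt_self hp' (by norm_num)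
      have := ih (p / 10) hlt (by omega : p / 10 ≠ 0) hdq
      rw [rep_succ]
      omega

lemma digProd_eq_zero (k p : ℕ) (h1 : 10 ^ k ≤ p) (h2 : p < (10 ^ (k + 1) - 1) / 9) :
    digProd p = 0 := by
  by_contra hd
  have hp : p ≠ 0 := by
    have : (1:ℕ) ≤ 10 ^ k := Nat.one_le_pow _ _ (by norm_num)
    omega
  have hlen : (Nat.digits 10 p).length = k + 1 := by
    rw [Nat.digits_len 10 p (by norm_num) hp]
    congr 1
    have hlt : p < 10 ^ (k + 1) := lt_of_lt_of_le h2 ((Nat.div_le_self _ _).trans (Nat.sub_le _ _))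
    exact Nat.log_eq_of_pow_le_of_lt_pow h1 hlt
  have := rep_le_of_digProd_ne_zero p hp hd
  rw [hlen] at this
  omega

lemma sum_range_add {M : Type*} [AddCommMonoid M] (f : ℕ → M) (a b : ℕ) :
    ∑ i ∈ Finset.range (a + b), f i
      = ∑ i ∈ Finset.range a, f i + ∑ i ∈ Finset.range b, f (a + i) := by
  induction b with
  | zero => simp
  | succ b ih =>
    rw [show a + (b + 1) = (a + b) + 1 from rfl, Finset.sum_range_succ, ih,
      Finset.sum_range_succ, add_assoc]

lemma sum_range_ten {M : Type*} [AddCommMonoid M] (f : ℕ → M) (m : ℕ) :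
    ∑ i ∈ Finset.range (10 * m), f i
      = ∑ q ∈ Finset.range m, ∑ d ∈ Finset.range 10, f (10 * q + d) := by
  induction m with
  | zero => simp
  | succ m ih =>
    rw [Nat.mul_succ, sum_range_add, ih,
      Finset.sum_range_succ (fun q => ∑ d ∈ Finset.range 10, f (10 * q + d))]

lemma padProd_step (k q d : ℕ) (hd : d < 10) :
    padProd (k + 1) (10 * q + d) = d * padProd k q := by
  unfold padProd
  rcases le_or_gt (10 ^ k) q with hq | hq
  · have hle : 10 ^ (k + 1) ≤ 10 * q + d := by
      have : (10:ℕ) ^ (k + 1) = 10 * 10 ^ k := by ring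
      omega
    rw [if_pos hle, if_pos hq]
    have hpos : 0 < 10 * q + d := by
      have : (1:ℕ) ≤ 10 ^ k := Nat.one_le_pow _ _ (by norm_num)
      omega
    rw [digProd_cons _ hpos]
    have h1 : (10 * q + d) % 10 = d := by omega
    have h2 : (10 * q + d) / 10 = q := by omega
    rw [h1, h2]
  · have hlt : 10 * q + d < 10 ^ (k + 1) := by
      have : (10:ℕ) ^ (k + 1) = 10 * 10 ^ k := by ring
      omega
    rw [if_neg (by omega), if_neg (by omega), mul_zero]

lemma sum_padProd (k : ℕ) :
    ∑ p ∈ Finset.range (10 ^ (k + 1)), padProd k p = 45 ^ (k + 1) := by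
  induction k with
  | zero =>
    have : (10:ℕ) ^ 1 = 10 := by norm_num
    rw [this]
    norm_num [Finset.sum_range_succ, padProd, digProd]
  | succ k ih =>
    have h10 : (10:ℕ) ^ (k + 2) = 10 * 10 ^ (k + 1) := by ring
    rw [h10, sum_range_ten]
    have : ∀ q ∈ Finset.range (10 ^ (k + 1)),
        ∑ d ∈ Finset.range 10, padProd (k + 1) (10 * q + d) = 45 * padProd k q := by
      intro q _
      have : ∀ d ∈ Finset.range 10, padProd (k + 1) (10 * q + d) = d * padProd k q := by
        intro d hd
        exact padProd_step k q d (Finset.mem_range.mp hd)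
      rw [Finset.sum_congr rfl this, ← Finset.sum_mul]
      norm_num [Finset.sum_range_succ]
    rw [Finset.sum_congr rfl this, ← Finset.mul_sum, ih]
    ring

lemma sum_padProd_odd (k : ℕ) :
    ∑ p ∈ Finset.range (10 ^ (k + 1)), (if Odd p then padProd k p else 0)
      = 25 * 45 ^ k := by
  cases k with
  | zero =>
    have : (10:ℕ) ^ 1 = 10 := by norm_num
    rw [this]
    norm_num [Finset.sum_range_succ, padProd, digProd, Nat.odd_iff]
  | succ k =>
    have h10 : (10:ℕ) ^ (k + 2) = 10 * 10 ^ (k + 1) := by ring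
    rw [h10, sum_range_ten]
    have : ∀ q ∈ Finset.range (10 ^ (k + 1)),
        ∑ d ∈ Finset.range 10, (if Odd (10 * q + d) then padProd (k + 1) (10 * q + d) else 0)
          = 25 * padProd k q := by
      intro q _
      have : ∀ d ∈ Finset.range 10,
          (if Odd (10 * q + d) then padProd (k + 1) (10 * q + d) else 0)
            = (if Odd d then d else 0) * padProd k q := by
        intro d hd
        have hodd : Odd (10 * q + d) ↔ Odd d := by
          simp [Nat.odd_iff, Nat.add_mod, Nat.mul_mod]
        rw [padProd_step k q d (Finset.mem_range.mp hd)]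
        by_cases h : Odd d
        · rw [if_pos (hodd.mpr h), if_pos h]
        · rw [if_neg (fun hh => h (hodd.mp hh)), if_neg h, zero_mul]
      have hsum : ∑ d ∈ Finset.range 10, (if Odd d then d else 0) = 25 := by
        simp [Finset.sum_range_succ, Nat.odd_iff]
      rw [Finset.sum_congr rfl this, ← Finset.sum_mul, hsum]
    rw [Finset.sum_congr rfl this, ← Finset.mul_sum, sum_padProd]

/-- The sum of the products of the decimal digits of all odd numbers from the repunit
with `k+1` ones up to `99...9` (`k+1` nines) equals `5^(k+2) * 9^k`. -/
theorem stmt1 (k : ℕ) :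
    ∑ p ∈ (Finset.Icc ((10 ^ (k + 1) - 1) / 9) (10 ^ (k + 1) - 1)).filter
      (fun p => Odd p), digProd p = 5 ^ (k + 2) * 9 ^ k := by
  set R := (10 ^ (k + 1) - 1) / 9 with hR
  set N := 10 ^ (k + 1) with hN
  have hN1 : 1 ≤ N := Nat.one_le_pow _ _ (by norm_num)
  have hIcc : Finset.Icc R (N - 1) = Finset.Ico R N := by
    rw [← Finset.Ico_add_one_right_eq_Icc]
    congr 1
    omega
  rw [hIcc, Finset.sum_filter]
  have hRN : R ≤ N := Nat.div_le_self _ _ |>.trans (Nat.sub_le _ _)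
  -- contributions on Ico R N agree with padded products
  have hcongr : ∀ p ∈ Finset.Ico R N, (if Odd p then digProd p else 0)
      = (if Odd p then padProd k p else 0) := by
    intro p hp
    obtain ⟨hp1, hp2⟩ := Finset.mem_Ico.mp hp
    have hk : 10 ^ k ≤ p := le_trans (rep_ge k) hp1
    unfold padProd
    rw [if_pos hk]
  rw [Finset.sum_congr rfl hcongr]
  -- extend to the full range: terms below R vanish
  have hzero : ∀ p ∈ Finset.Ico 0 R, (if Odd p then padProd k p else 0) = 0 := by
    intro p hp
    obtain ⟨_, hp2⟩ := Finset.mem_Ico.mp hp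
    have : padProd k p = 0 := by
      unfold padProd
      rcases le_or_gt (10 ^ k) p with h | h
      · rw [if_pos h, digProd_eq_zero k p h hp2]
      · rw [if_neg (by omega)]
    simp [this]
  have hsplit : ∑ p ∈ Finset.Ico 0 N, (if Odd p then padProd k p else 0)
      = ∑ p ∈ Finset.Ico 0 R, (if Odd p then padProd k p else 0)
        + ∑ p ∈ Finset.Ico R N, (if Odd p then padProd k p else 0) :=
    (Finset.sum_Ico_consecutive _ (Nat.zero_le R) hRN).symm
  have hfull : ∑ p ∈ Finset.Ico R N, (if Odd p then padProd k p else 0)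
      = ∑ p ∈ Finset.range N, (if Odd p then padProd k p else 0) := by
    rw [Finset.range_eq_Ico, hsplit, Finset.sum_congr rfl hzero]
    simp
  rw [hfull, hN, sum_padProd_odd]
  have : (45:ℕ) ^ k = 5 ^ k * 9 ^ k := by
    rw [← mul_pow]; norm_num
  rw [this]
  ring
end

section
/- The sum of the products of the decimal digits of the odd numbers 1, 3, ..., 10^(k+1) - 1 equals (25/44)·(45^(k+1) - 1); equivalently, 44·b(5·10^k) = 25·(45^(k+1) - 1), where b(n) is the sum of products of digits of the first n odd numbers. -/
/-- Sum of products of digits of the first `n` odd positive numbers. -/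
def b (n : ℕ) : ℕ := ∑ j ∈ Finset.Icc 1 n, digProd (2 * j - 1)

/-- Zero-padded digit product: product of the digits of `r` padded with zeros to length `d`. -/
def g (d r : ℕ) : ℕ :=
  (Nat.digits 10 r ++ List.replicate (d - (Nat.digits 10 r).length) 0).prod

lemma g_step (d c q : ℕ) (hc : c < 10) :
    g (d + 1) (c + 10 * q) = c * g d q := by
  rcases Nat.eq_zero_or_pos (c + 10 * q) with h | h
  · have hc0 : c = 0 := by omega
    have hq0 : q = 0 := by omega
    subst hc0; subst hq0
    simp [g]
  · have hd : Nat.digits 10 (c + 10 * q) = c :: Nat.digits 10 q := by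
      rw [Nat.digits_def' (by norm_num : 1 < 10) h]
      congr 1
      · omega
      · congr 1; omega
    simp [g, hd, Nat.succ_sub_succ]

lemma digProd_split (d a : ℕ) (ha : 1 ≤ a) (ha' : a < 10) :
    ∀ r < 10 ^ d, digProd (a * 10 ^ d + r) = a * g d r := by
  induction d with
  | zero =>
    intro r hr
    interval_cases r
    have h : Nat.digits 10 a = [a] := by
      rw [Nat.digits_def' (by norm_num : 1 < 10) (by omega)]
      rw [Nat.mod_eq_of_lt ha', Nat.div_eq_of_lt ha']
      simp
    simp [digProd, g, h]
  | succ d ih =>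
    intro r hr
    have hq : r / 10 < 10 ^ d := by
      rw [pow_succ] at hr; omega
    have hps : a * 10 ^ (d + 1) = 10 * (a * 10 ^ d) := by rw [pow_succ]; ring
    have key : a * 10 ^ (d + 1) + r = r % 10 + 10 * (a * 10 ^ d + r / 10) := by
      rw [hps]; omega
    have hpos : 0 < a * 10 ^ d + r / 10 := by positivity
    have hdig : Nat.digits 10 (a * 10 ^ (d + 1) + r) =
        r % 10 :: Nat.digits 10 (a * 10 ^ d + r / 10) := by
      rw [key, Nat.digits_def' (by norm_num : 1 < 10) (by omega)]
      congr 1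
      · omega
      · congr 1; omega
    have hr' : r = r % 10 + 10 * (r / 10) := by omega
    calc digProd (a * 10 ^ (d + 1) + r)
        = r % 10 * digProd (a * 10 ^ d + r / 10) := by simp [digProd, hdig]
      _ = r % 10 * (a * g d (r / 10)) := by rw [ih _ hq]
      _ = a * (r % 10 * g d (r / 10)) := by ring
      _ = a * g (d + 1) r := by
          rw [← g_step d (r % 10) (r / 10) (by omega), ← hr']

lemma sum_range_mul' (f : ℕ → ℕ) (m n : ℕ) :
    ∑ i ∈ Finset.range (m * n), f i
      = ∑ t ∈ Finset.range m, ∑ s ∈ Finset.range n, f (t * n + s) := by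
  induction m with
  | zero => simp
  | succ m ih =>
    rw [Finset.sum_range_succ, ← ih, Nat.succ_mul, Finset.sum_range_add]

lemma sum_g (d : ℕ) : ∑ q ∈ Finset.range (10 ^ d), g d q = 45 ^ d := by
  induction d with
  | zero => simp [g]
  | succ d ih =>
    rw [show (10:ℕ) ^ (d + 1) = 10 ^ d * 10 from pow_succ 10 d, sum_range_mul']
    have h : ∀ q ∈ Finset.range (10 ^ d),
        ∑ c ∈ Finset.range 10, g (d + 1) (q * 10 + c) = 45 * g d q := by
      intro q _
      have h2 : ∀ c ∈ Finset.range 10, g (d + 1) (q * 10 + c) = c * g d q := by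
        intro c hc
        rw [show q * 10 + c = c + 10 * q by ring]
        exact g_step d c q (Finset.mem_range.mp hc)
      rw [Finset.sum_congr rfl h2, ← Finset.sum_mul]
      norm_num [Finset.sum_range_succ]
    rw [Finset.sum_congr rfl h, ← Finset.mul_sum, ih, pow_succ]
    ring

lemma sum_gOdd (d : ℕ) :
    ∑ s ∈ Finset.range (5 * 10 ^ d), g (d + 1) (2 * s + 1) = 25 * 45 ^ d := by
  rw [show 5 * 10 ^ d = 10 ^ d * 5 by ring, sum_range_mul']
  have h : ∀ q ∈ Finset.range (10 ^ d),
      ∑ t ∈ Finset.range 5, g (d + 1) (2 * (q * 5 + t) + 1) = 25 * g d q := by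
    intro q _
    have h2 : ∀ t ∈ Finset.range 5,
        g (d + 1) (2 * (q * 5 + t) + 1) = (2 * t + 1) * g d q := by
      intro t ht
      rw [show 2 * (q * 5 + t) + 1 = (2 * t + 1) + 10 * q by ring]
      exact g_step d _ q (by have := Finset.mem_range.mp ht; omega)
    rw [Finset.sum_congr rfl h2, ← Finset.sum_mul]
    norm_num [Finset.sum_range_succ]
  rw [Finset.sum_congr rfl h, ← Finset.mul_sum, sum_g]

lemma sum_top (k : ℕ) :
    ∑ i ∈ Finset.range (45 * 10 ^ k), digProd (2 * (5 * 10 ^ k + i) + 1)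
      = 25 * 45 ^ (k + 1) := by
  rw [show 45 * 10 ^ k = 9 * (5 * 10 ^ k) by ring, sum_range_mul']
  have h : ∀ t ∈ Finset.range 9,
      ∑ s ∈ Finset.range (5 * 10 ^ k),
        digProd (2 * (5 * 10 ^ k + (t * (5 * 10 ^ k) + s)) + 1)
      = (t + 1) * (25 * 45 ^ k) := by
    intro t ht
    have h2 : ∀ s ∈ Finset.range (5 * 10 ^ k),
        digProd (2 * (5 * 10 ^ k + (t * (5 * 10 ^ k) + s)) + 1)
          = (t + 1) * g (k + 1) (2 * s + 1) := by
      intro s hs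
      have hs' := Finset.mem_range.mp hs
      have h1 : 2 * (5 * 10 ^ k + (t * (5 * 10 ^ k) + s)) + 1
          = (t + 1) * 10 ^ (k + 1) + (2 * s + 1) := by
        rw [pow_succ]; ring
      rw [h1]
      exact digProd_split (k + 1) (t + 1) (by omega)
        (by have := Finset.mem_range.mp ht; omega) (2 * s + 1)
        (by rw [pow_succ]; omega)
    rw [Finset.sum_congr rfl h2, ← Finset.mul_sum, sum_gOdd]
  rw [Finset.sum_congr rfl h]
  rw [← Finset.sum_mul]
  norm_num [Finset.sum_range_succ, pow_succ]
  ring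

lemma b_eq (n : ℕ) : b n = ∑ i ∈ Finset.range n, digProd (2 * i + 1) := by
  unfold b
  rw [← Finset.Ico_add_one_right_eq_Icc, Finset.sum_Ico_eq_sum_range]
  apply Finset.sum_congr
  · congr 1
  · intro i _
    congr 1
    omega

/-- `44 * b (5 * 10^k) = 25 * (45^(k+1) - 1)`, i.e. the sum of digit products of the
odd numbers `1, 3, ..., 10^(k+1) - 1` equals `(25/44)(45^(k+1) - 1)`. -/
theorem stmt3 (k : ℕ) : 44 * b (5 * 10 ^ k) = 25 * (45 ^ (k + 1) - 1) := by
  induction k with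
  | zero =>
    have : b 5 = 25 := by
      rw [b_eq]
      norm_num [Finset.sum_range_succ, digProd]
    norm_num [this]
  | succ k ih =>
    have hsplit : (5:ℕ) * 10 ^ (k + 1) = 5 * 10 ^ k + 45 * 10 ^ k := by
      rw [pow_succ]; ring
    rw [b_eq, hsplit, Finset.sum_range_add, ← b_eq, sum_top]
    have h1 : (1:ℕ) ≤ 45 ^ (k + 1) := Nat.one_le_pow _ _ (by norm_num)
    have h2 : (45:ℕ) ^ (k + 1 + 1) = 45 * 45 ^ (k + 1) := by ring
    omega
end

section
/- For any even number 2n with decimal digits a_m a_{m-1} ... a_1 a_0 (so 2n = Σ_{k=0}^{m} a_k·10^k with a_m ≥ 1 and a_0 even), the sum a(n) of products of digits of the first n even numbers satisfies: a(n) = (5/11)(45^m - 1) + Σ_{k=1}^{m} (∏_{k<j≤m} a_j)·(2·5^k·9^{k-1}·a_k·(a_k - 1)) + (∏_{i=1}^{m} a_i)·(a_0²/4 + a_0/2). -/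
open Finset

/-- Sum of products of digits of the first `n` even positive numbers. -/
def a (n : ℕ) : ℕ := ∑ j ∈ Finset.Icc 1 n, digProd (2 * j)

lemma digProd_zero : digProd 0 = 1 := by simp [digProd]

lemma digProd_ten (q e : ℕ) (he : e < 10) (h : ¬ (q = 0 ∧ e = 0)) :
    digProd (10 * q + e) = e * digProd q := by
  have hpos : 0 < 10 * q + e := by omega
  unfold digProd
  rw [Nat.digits_def' (by norm_num : (1:ℕ) < 10) hpos, Nat.mul_add_mod,
    Nat.mul_add_div (by norm_num), Nat.mod_eq_of_lt he, Nat.div_eq_of_lt he]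
  simp [List.prod_cons]

/-- padded digit product: product of digits of `q` padded with zeros to length `s`. -/
def pp (s q : ℕ) : ℕ := if (Nat.digits 10 q).length = s then digProd q else 0

lemma pp_zero_zero : pp 0 0 = 1 := by simp [pp, digProd]

lemma pp_ten (s q e : ℕ) (he : e < 10) : pp (s + 1) (10 * q + e) = e * pp s q := by
  by_cases h0 : q = 0 ∧ e = 0
  · obtain ⟨hq, he0⟩ := h0; subst hq; subst he0; simp [pp]
  · have hpos : 0 < 10 * q + e := by omega
    have hlen : (Nat.digits 10 (10 * q + e)).length = (Nat.digits 10 q).length + 1 := by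
      rw [Nat.digits_def' (by norm_num : (1:ℕ) < 10) hpos, Nat.mul_add_div (by norm_num),
        Nat.div_eq_of_lt he]
      simp
    unfold pp
    rw [hlen]
    by_cases hs : (Nat.digits 10 q).length = s
    · simp only [hs, if_pos rfl]
      exact digProd_ten q e he h0
    · rw [if_neg (by omega), if_neg hs, mul_zero]

lemma pp_sum (s : ℕ) (c : ℕ → ℕ) (hc : ∀ k < s, c k ≤ 9) :
    pp s (∑ k ∈ range s, c k * 10 ^ k) = ∏ k ∈ range s, c k := by
  induction s generalizing c with
  | zero => simp [pp, digProd]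
  | succ s ih =>
    have h1 : ∑ k ∈ range (s + 1), c k * 10 ^ k
        = 10 * (∑ k ∈ range s, c (k + 1) * 10 ^ k) + c 0 := by
      rw [Finset.sum_range_succ', Finset.mul_sum]
      simp only [pow_zero, mul_one]
      congr 1
      exact Finset.sum_congr rfl fun k _ => by ring
    rw [h1, pp_ten _ _ _ (by have := hc 0 (by omega); omega),
      ih _ (fun k hk => hc (k + 1) (by omega)), Finset.prod_range_succ']
    ring

lemma sum_range_mul_s4 {M : Type*} [AddCommMonoid M] (f : ℕ → M) (b N : ℕ) :
    ∑ j ∈ range (N * b), f j = ∑ i ∈ range N, ∑ e ∈ range b, f (i * b + e) := by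
  induction N with
  | zero => simp
  | succ N ih => rw [Nat.succ_mul, Finset.sum_range_add, ih, Finset.sum_range_succ]

lemma sum_range_mul_add {M : Type*} [AddCommMonoid M] (f : ℕ → M) (b N r : ℕ) :
    ∑ j ∈ range (N * b + r), f j
      = (∑ i ∈ range N, ∑ e ∈ range b, f (i * b + e)) + ∑ e ∈ range r, f (N * b + e) := by
  rw [Finset.sum_range_add, sum_range_mul_s4]

lemma digProd_single (e : ℕ) (he : e < 10) (h0 : e ≠ 0) : digProd e = e := by
  unfold digProd
  rw [Nat.digits_def' (by norm_num : (1:ℕ) < 10) (by omega), Nat.mod_eq_of_lt he,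
    Nat.div_eq_of_lt he]
  simp

lemma sum_digProd_block (q : ℕ) :
    ∑ e ∈ range 10, (digProd (10 * q + e) : ℚ)
      = 45 * digProd q + (if q = 0 then 1 else 0) := by
  by_cases hq : q = 0
  · subst hq
    simp only [mul_zero, zero_add, if_pos rfl]
    rw [show (10:ℕ) = 9 + 1 by rfl]
    repeat rw [Finset.sum_range_succ]
    rw [Finset.sum_range_zero]
    rw [digProd_zero]
    repeat rw [digProd_single _ (by norm_num) (by norm_num)]
    norm_num
  · rw [if_neg hq, add_zero]
    rw [Finset.sum_congr rfl (fun e he => by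
      rw [digProd_ten q e (mem_range.mp he) (by tauto)])]
    push_cast
    rw [← Finset.sum_mul]
    norm_num [Finset.sum_range_succ]

lemma sum_digProd_pow (s : ℕ) :
    (∑ r ∈ range (10 ^ s), (digProd r : ℚ)) = ∑ t ∈ range (s + 1), 45 ^ t := by
  induction s with
  | zero => simp [digProd]
  | succ s ih =>
    rw [pow_succ, sum_range_mul_s4]
    have h1 : ∀ i ∈ range (10 ^ s), ∑ e ∈ range 10, (digProd (i * 10 + e) : ℚ)
        = 45 * digProd i + (if i = 0 then 1 else 0) := by
      intro i _
      rw [Finset.sum_congr rfl fun e _ => by rw [show i * 10 + e = 10 * i + e by ring]]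
      exact sum_digProd_block i
    rw [Finset.sum_congr rfl h1, Finset.sum_add_distrib, ← Finset.mul_sum, ih,
      Finset.sum_ite_eq' _ 0 (fun _ => (1:ℚ)),
      if_pos (mem_range.mpr (by positivity))]
    rw [Finset.sum_range_succ' (fun t => (45:ℚ) ^ t) (s + 1), Finset.mul_sum]
    congr 1
    exact Finset.sum_congr rfl fun t _ => by ring

lemma gauss_sum (n : ℕ) : ∑ e ∈ range n, (e : ℚ) = (n : ℚ) * ((n : ℚ) - 1) / 2 := by
  induction n with
  | zero => simp
  | succ n ih => rw [Finset.sum_range_succ, ih]; push_cast; ring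

lemma pp_partial_sum (s : ℕ) (c : ℕ → ℕ) (hc : ∀ k < s, c k ≤ 9) :
    (∑ r ∈ range (∑ k ∈ range s, c k * 10 ^ k), (pp s r : ℚ))
      = ∑ k ∈ range s,
          (∏ j ∈ Ico (k + 1) s, (c j : ℚ)) * ((c k : ℚ) * ((c k : ℚ) - 1) / 2) * 45 ^ k := by
  induction s generalizing c with
  | zero => simp
  | succ s ih =>
    have h1 : ∑ k ∈ range (s + 1), c k * 10 ^ k
        = (∑ k ∈ range s, c (k + 1) * 10 ^ k) * 10 + c 0 := by
      rw [Finset.sum_range_succ', Finset.sum_mul]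
      simp only [pow_zero, mul_one]
      congr 1
      exact Finset.sum_congr rfl fun k _ => by ring
    rw [h1, sum_range_mul_add]
    have hpart1 : (∑ i ∈ range (∑ k ∈ range s, c (k + 1) * 10 ^ k),
          ∑ e ∈ range 10, (pp (s + 1) (i * 10 + e) : ℚ))
        = 45 * ∑ k ∈ range s,
            (∏ j ∈ Ico (k + 1) s, (c (j + 1) : ℚ)) *
              ((c (k + 1) : ℚ) * ((c (k + 1) : ℚ) - 1) / 2) * 45 ^ k := by
      rw [← ih (fun k => c (k + 1)) (fun k hk => hc (k + 1) (by omega)), Finset.mul_sum]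
      refine Finset.sum_congr rfl fun i _ => ?_
      rw [Finset.sum_congr rfl (fun e he => by
        rw [show i * 10 + e = 10 * i + e by ring, pp_ten s i e (mem_range.mp he)])]
      push_cast
      rw [← Finset.sum_mul]
      norm_num [Finset.sum_range_succ]
    have hpart2 : (∑ e ∈ range (c 0),
          (pp (s + 1) ((∑ k ∈ range s, c (k + 1) * 10 ^ k) * 10 + e) : ℚ))
        = ((c 0 : ℚ) * ((c 0 : ℚ) - 1) / 2) * ∏ k ∈ range s, (c (k + 1) : ℚ) := by
      rw [Finset.sum_congr rfl (fun e he => by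
        rw [show (∑ k ∈ range s, c (k + 1) * 10 ^ k) * 10 + e
            = 10 * (∑ k ∈ range s, c (k + 1) * 10 ^ k) + e by ring,
          pp_ten s _ e (by have := mem_range.mp he; have := hc 0 (by omega); omega),
          pp_sum s (fun k => c (k + 1)) (fun k hk => hc (k + 1) (by omega))])]
      push_cast
      rw [← Finset.sum_mul, gauss_sum]
    rw [hpart1, hpart2]
    rw [Finset.sum_range_succ' (fun k =>
      (∏ j ∈ Ico (k + 1) (s + 1), (c j : ℚ)) * ((c k : ℚ) * ((c k : ℚ) - 1) / 2) * 45 ^ k) s]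
    congr 1
    · rw [Finset.mul_sum]
      refine Finset.sum_congr rfl fun k _ => ?_
      have hprod : ∏ j ∈ Ico (k + 1 + 1) (s + 1), (c j : ℚ)
          = ∏ j ∈ Ico (k + 1) s, (c (j + 1) : ℚ) := by
        rw [Finset.prod_Ico_eq_prod_range, Finset.prod_Ico_eq_prod_range]
        rw [show s + 1 - (k + 1 + 1) = s - (k + 1) by omega]
        exact Finset.prod_congr rfl fun i _ => by rw [show k + 1 + 1 + i = k + 1 + i + 1 by omega]
      rw [hprod]
      ring
    · have : ∏ j ∈ Ico (0 + 1) (s + 1), (c j : ℚ) = ∏ k ∈ range s, (c (k + 1) : ℚ) := by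
        rw [Finset.prod_Ico_eq_prod_range]
        simp only [Nat.add_sub_cancel]
        exact Finset.prod_congr rfl fun i _ => by rw [show 0 + 1 + i = i + 1 by omega]
      rw [this]
      ring

lemma sum_digits_lt (m : ℕ) (c : ℕ → ℕ) (hc : ∀ k < m, c k ≤ 9) :
    ∑ k ∈ range m, c k * 10 ^ k < 10 ^ m := by
  induction m with
  | zero => simp
  | succ m ih =>
    rw [Finset.sum_range_succ]
    have h1 := ih (fun k hk => hc k (by omega))
    have h2 : c m ≤ 9 := hc m (by omega)
    have h3 : c m * 10 ^ m ≤ 9 * 10 ^ m := Nat.mul_le_mul_right _ h2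
    calc ∑ k ∈ range m, c k * 10 ^ k + c m * 10 ^ m
        < 10 ^ m + 9 * 10 ^ m := by omega
      _ = 10 ^ (m + 1) := by ring

lemma digits_len_eq (m r : ℕ) (h1 : 10 ^ m ≤ r) (h2 : r < 10 ^ (m + 1)) :
    (Nat.digits 10 r).length = m + 1 := by
  have hr : r ≠ 0 := by have h := pow_pos (by norm_num : (0:ℕ) < 10) m; omega
  rw [Nat.digits_len 10 r (by norm_num) hr, Nat.log_eq_of_pow_le_of_lt_pow h1 h2]

lemma pp_eq_digProd_of_len (m r : ℕ) (h1 : 10 ^ m ≤ r) (h2 : r < 10 ^ (m + 1)) :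
    (pp (m + 1) r : ℚ) = (digProd r : ℚ) := by
  unfold pp
  rw [if_pos (digits_len_eq m r h1 h2)]

lemma pp_eq_zero_of_lt (m r : ℕ) (h2 : r < 10 ^ m) : pp (m + 1) r = 0 := by
  unfold pp
  rcases Nat.eq_zero_or_pos r with hr | hr
  · subst hr; rw [if_neg (by simp)]
  · rw [Nat.digits_len 10 r (by norm_num) (by omega)]
    have : Nat.log 10 r < m := Nat.log_lt_of_lt_pow (by omega) h2
    rw [if_neg (by omega)]

lemma sum_digProd_lt (m : ℕ) (c : ℕ → ℕ) (hc : ∀ k < m + 1, c k ≤ 9) (hm : 1 ≤ c m) :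
    ∑ r ∈ range (∑ k ∈ range (m + 1), c k * 10 ^ k), (digProd r : ℚ)
      = (∑ t ∈ range (m + 1), (45:ℚ) ^ t)
        + ∑ r ∈ range (∑ k ∈ range (m + 1), c k * 10 ^ k), (pp (m + 1) r : ℚ) := by
  set Q := ∑ k ∈ range (m + 1), c k * 10 ^ k with hQdef
  have hub : Q < 10 ^ (m + 1) := sum_digits_lt (m + 1) c hc
  have hlb : 10 ^ m ≤ Q := by
    calc (10:ℕ) ^ m = 1 * 10 ^ m := (one_mul _).symm
      _ ≤ c m * 10 ^ m := Nat.mul_le_mul_right _ hm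
      _ ≤ Q := Finset.single_le_sum (f := fun k => c k * 10 ^ k)
          (fun k _ => Nat.zero_le _) (mem_range.mpr (by omega))
  have hsplit : ∀ g : ℕ → ℚ, ∑ r ∈ range Q, g r
      = ∑ r ∈ range (10 ^ m), g r + ∑ r ∈ Ico (10 ^ m) Q, g r := by
    intro g
    rw [Finset.range_eq_Ico, Finset.range_eq_Ico]
    exact (Finset.sum_Ico_consecutive g (Nat.zero_le _) hlb).symm
  rw [hsplit, hsplit (fun r => (pp (m + 1) r : ℚ))]
  have hz : ∑ r ∈ range (10 ^ m), (pp (m + 1) r : ℚ) = 0 := by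
    refine Finset.sum_eq_zero fun r hr => ?_
    rw [pp_eq_zero_of_lt m r (mem_range.mp hr)]; norm_num
  have hIco : ∑ r ∈ Ico (10 ^ m) Q, (pp (m + 1) r : ℚ)
      = ∑ r ∈ Ico (10 ^ m) Q, (digProd r : ℚ) := by
    refine Finset.sum_congr rfl fun r hr => ?_
    have := Finset.mem_Ico.mp hr
    exact pp_eq_digProd_of_len m r this.1 (by omega)
  rw [hz, hIco, zero_add, sum_digProd_pow m]

lemma prod_shift (d : ℕ → ℕ) (a m : ℕ) :
    ∏ j ∈ Icc (a + 1) m, ((d j : ℚ)) = ∏ j ∈ Ico a m, (d (j + 1) : ℚ) := by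
  rw [show Icc (a + 1) m = Ico (a + 1) (m + 1) from (Finset.Ico_add_one_right_eq_Icc _ _).symm,
    Finset.prod_Ico_eq_prod_range, Finset.prod_Ico_eq_prod_range,
    show m + 1 - (a + 1) = m - a by omega]
  exact Finset.prod_congr rfl fun i _ => by rw [show a + 1 + i = a + i + 1 by omega]

/-- Closed formula for `a(n)` in terms of the decimal digits `d 0, ..., d m` of `2n`
(with `d m ≥ 1`, all digits `≤ 9` and `d 0` even). -/
theorem stmt4 (n m : ℕ) (d : ℕ → ℕ) (hn : 1 ≤ n)
    (hrep : 2 * n = ∑ k ∈ Finset.range (m + 1), d k * 10 ^ k)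
    (hlead : 1 ≤ d m) (hdig : ∀ k ≤ m, d k ≤ 9) (heven : Even (d 0)) :
    (a n : ℚ) =
      5 / 11 * (45 ^ m - 1)
      + ∑ k ∈ Finset.Icc 1 m,
          (∏ j ∈ Finset.Icc (k + 1) m, (d j : ℚ))
            * (2 * 5 ^ k * 9 ^ (k - 1) * (d k : ℚ) * ((d k : ℚ) - 1))
      + (∏ i ∈ Finset.Icc 1 m, (d i : ℚ)) * ((d 0 : ℚ) ^ 2 / 4 + (d 0 : ℚ) / 2) := by
  obtain ⟨t, ht⟩ := heven
  have ht4 : t ≤ 4 := by have := hdig 0 (Nat.zero_le m); omega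
  set Q := ∑ k ∈ range m, d (k + 1) * 10 ^ k with hQdef
  have hsplit2n : ∑ k ∈ Finset.range (m + 1), d k * 10 ^ k = 10 * Q + d 0 := by
    rw [Finset.sum_range_succ', hQdef, Finset.mul_sum, pow_zero, mul_one]
    congr 1
    exact Finset.sum_congr rfl fun k _ => by ring
  have h2n : 2 * n = 10 * Q + d 0 := by rw [hrep, hsplit2n]
  have hn5 : n + 1 = Q * 5 + (t + 1) := by omega
  have hcast : (1 : ℚ) + (a n : ℚ) = ∑ j ∈ range (n + 1), (digProd (2 * j) : ℚ) := by
    rw [Finset.range_eq_Ico, Finset.sum_eq_sum_Ico_succ_bot (by omega : 0 < n + 1),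
      Finset.Ico_add_one_right_eq_Icc]
    simp [a, digProd_zero]
  have hblock : ∀ i : ℕ, ∑ e ∈ range 5, (digProd (2 * (i * 5 + e)) : ℚ)
      = 20 * (digProd i : ℚ) + (if i = 0 then 1 else 0) := by
    intro i
    by_cases hi : i = 0
    · subst hi
      rw [if_pos rfl]
      rw [show (5 : ℕ) = 4 + 1 from rfl]
      repeat rw [Finset.sum_range_succ]
      rw [Finset.sum_range_zero]
      norm_num [digProd_zero, digProd_single 2 (by norm_num) (by norm_num),
        digProd_single 4 (by norm_num) (by norm_num), digProd_single 6 (by norm_num) (by norm_num),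
        digProd_single 8 (by norm_num) (by norm_num)]
    · rw [if_neg hi, add_zero,
        Finset.sum_congr rfl (fun e he => by
          rw [show 2 * (i * 5 + e) = 10 * i + 2 * e by ring,
            digProd_ten i (2 * e) (by have := mem_range.mp he; omega) (by tauto)])]
      push_cast
      rw [← Finset.sum_mul]
      norm_num [Finset.sum_range_succ]
  have hmain : (1 : ℚ) + (a n : ℚ)
      = 20 * (∑ i ∈ range Q, (digProd i : ℚ)) + (if (0 : ℕ) ∈ range Q then (1 : ℚ) else 0)
        + ∑ e ∈ range (t + 1), (digProd (2 * (Q * 5 + e)) : ℚ) := by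
    rw [hcast, hn5, sum_range_mul_add]
    congr 1
    rw [Finset.sum_congr rfl fun i _ => hblock i, Finset.sum_add_distrib, ← Finset.mul_sum,
      Finset.sum_ite_eq' _ 0 (fun _ => (1 : ℚ))]
  have hgauss2 : ∑ e ∈ range (t + 1), (2 * e : ℚ) = (t : ℚ) * ((t : ℚ) + 1) := by
    rw [← Finset.mul_sum, gauss_sum]
    push_cast
    ring
  rcases Nat.eq_zero_or_pos m with hm0 | hmpos
  · -- case m = 0
    subst hm0
    have hQ0 : Q = 0 := by simp [hQdef]
    have hd0 : d 0 = 2 * n := by omega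
    have hd9 : d 0 ≤ 9 := hdig 0 le_rfl
    have hsumj : ∑ j ∈ Finset.Icc 1 n, (j : ℚ) = (n : ℚ) * ((n : ℚ) + 1) / 2 := by
      have h0 : ∑ j ∈ range (n + 1), (j : ℚ) = ((0 : ℕ) : ℚ) + ∑ j ∈ Finset.Icc 1 n, (j : ℚ) := by
        rw [Finset.range_eq_Ico, Finset.sum_eq_sum_Ico_succ_bot (by omega : 0 < n + 1),
          Finset.Ico_add_one_right_eq_Icc]
      rw [gauss_sum] at h0
      push_cast at h0
      linarith
    have hval : (a n : ℚ) = ∑ j ∈ Finset.Icc 1 n, (2 * j : ℚ) := by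
      unfold a
      push_cast
      refine Finset.sum_congr rfl fun j hj => ?_
      have hj' := Finset.mem_Icc.mp hj
      rw [digProd_single (2 * j) (by omega) (by omega)]
      push_cast
      ring
    have hdcast : (d 0 : ℚ) = 2 * (n : ℚ) := by exact_mod_cast congrArg (Nat.cast (R := ℚ)) hd0
    rw [hval, ← Finset.mul_sum, hsumj]
    simp only [show Finset.Icc 1 0 = (∅ : Finset ℕ) from rfl, Finset.sum_empty,
      Finset.prod_empty, pow_zero]
    rw [hdcast]
    ring
  · -- case m ≥ 1
    obtain ⟨m', rfl⟩ : ∃ m', m = m' + 1 := ⟨m - 1, by omega⟩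
    have hc : ∀ k < m' + 1, d (k + 1) ≤ 9 := fun k hk => hdig (k + 1) (by omega)
    have hQub : Q < 10 ^ (m' + 1) := by
      rw [hQdef]; exact sum_digits_lt (m' + 1) (fun k => d (k + 1)) hc
    have hQlb : 10 ^ m' ≤ Q := by
      calc (10 : ℕ) ^ m' = 1 * 10 ^ m' := (one_mul _).symm
        _ ≤ d (m' + 1) * 10 ^ m' := Nat.mul_le_mul_right _ hlead
        _ ≤ Q := Finset.single_le_sum (f := fun k => d (k + 1) * 10 ^ k)
            (fun k _ => Nat.zero_le _) (mem_range.mpr (by omega))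
    have hQpos : 0 < Q := lt_of_lt_of_le (pow_pos (by norm_num) m') hQlb
    have hU := sum_digProd_lt m' (fun k => d (k + 1)) hc hlead
    simp only [← hQdef] at hU
    have hP := pp_partial_sum (m' + 1) (fun k => d (k + 1)) hc
    simp only [← hQdef] at hP
    have hppQ := pp_sum (m' + 1) (fun k => d (k + 1)) hc
    simp only [← hQdef] at hppQ
    have hdpQ : (digProd Q : ℚ) = ∏ k ∈ range (m' + 1), (d (k + 1) : ℚ) := by
      rw [← pp_eq_digProd_of_len m' Q hQlb hQub, hppQ]
      push_cast
      rfl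
    have hpartial : ∑ e ∈ range (t + 1), (digProd (2 * (Q * 5 + e)) : ℚ)
        = (t : ℚ) * ((t : ℚ) + 1) * ∏ k ∈ range (m' + 1), (d (k + 1) : ℚ) := by
      rw [Finset.sum_congr rfl (fun e he => by
        rw [show 2 * (Q * 5 + e) = 10 * Q + 2 * e by ring,
          digProd_ten Q (2 * e) (by have := mem_range.mp he; omega)
            (by rintro ⟨h1, -⟩; omega)])]
      push_cast
      rw [← Finset.sum_mul, show ∑ e ∈ range (t + 1), 2 * (e : ℚ)
          = (t : ℚ) * ((t : ℚ) + 1) from hgauss2, hdpQ]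
    have han : (a n : ℚ)
        = 20 * (∑ i ∈ range (m' + 1), (45 : ℚ) ^ i)
          + 20 * (∑ k ∈ range (m' + 1), (∏ j ∈ Ico (k + 1) (m' + 1), (d (j + 1) : ℚ)) *
              ((d (k + 1) : ℚ) * ((d (k + 1) : ℚ) - 1) / 2) * 45 ^ k)
          + (t : ℚ) * ((t : ℚ) + 1) * ∏ k ∈ range (m' + 1), (d (k + 1) : ℚ) := by
      have := hmain
      rw [hU, hP, hpartial, if_pos (mem_range.mpr hQpos)] at this
      linarith
    rw [han]
    have hA : 5 / 11 * ((45 : ℚ) ^ (m' + 1) - 1) = 20 * ∑ i ∈ range (m' + 1), (45 : ℚ) ^ i := by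
      rw [geom_sum_eq (by norm_num : (45 : ℚ) ≠ 1)]
      ring
    have hB : ∑ k ∈ Finset.Icc 1 (m' + 1),
          (∏ j ∈ Finset.Icc (k + 1) (m' + 1), (d j : ℚ))
            * (2 * 5 ^ k * 9 ^ (k - 1) * (d k : ℚ) * ((d k : ℚ) - 1))
        = 20 * ∑ k ∈ range (m' + 1), (∏ j ∈ Ico (k + 1) (m' + 1), (d (j + 1) : ℚ)) *
            ((d (k + 1) : ℚ) * ((d (k + 1) : ℚ) - 1) / 2) * 45 ^ k := by
      rw [show Finset.Icc 1 (m' + 1) = Finset.Ico 1 (m' + 2) from (Finset.Ico_add_one_right_eq_Icc _ _).symm,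
        Finset.sum_Ico_eq_sum_range, show m' + 2 - 1 = m' + 1 by omega, Finset.mul_sum]
      refine Finset.sum_congr rfl fun k hk => ?_
      rw [show 1 + k = k + 1 by omega, prod_shift d (k + 1) (m' + 1),
        show k + 1 - 1 = k by omega, show (45 : ℚ) ^ k = 5 ^ k * 9 ^ k from by
          rw [← mul_pow]; norm_num]
      ring
    have hC : ∏ i ∈ Finset.Icc 1 (m' + 1), (d i : ℚ) = ∏ k ∈ range (m' + 1), (d (k + 1) : ℚ) := by
      have := prod_shift d 0 (m' + 1)
      rw [this, Finset.range_eq_Ico]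
    have hD : (d 0 : ℚ) = (t : ℚ) + (t : ℚ) := by exact_mod_cast congrArg (Nat.cast (R := ℚ)) ht
    rw [hA, hB, hC, hD]
    ring
end

section
/- For any odd number 2n-1 with decimal digits a_m a_{m-1} ... a_1 a_0 (so 2n-1 = Σ_{k=0}^{m} a_k·10^k with a_m ≥ 1 and a_0 odd), the sum b(n) of products of digits of the first n odd numbers satisfies: b(n) = (25/44)(45^m - 1) + Σ_{k=1}^{m} (∏_{k<j≤m} a_j)·(5^{k+1}·9^{k-1}·a_k·(a_k - 1)/2) + (∏_{i=1}^{m} a_i)·((a_0+1)/2)². -/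
namespace S5

def padProd (m s : ℕ) : ℕ := ∏ k ∈ Finset.range m, (s / 10 ^ k % 10)

def g (m s : ℕ) : ℕ := if Odd s then padProd m s else 0
def f (q : ℕ) : ℕ := if Odd q then digProd q else 0
def H (m r : ℕ) : ℕ := ∑ s ∈ Finset.range r, g m s
def S (N : ℕ) : ℕ := ∑ q ∈ Finset.range N, f q

lemma sum_range_add (F : ℕ → ℕ) (p q : ℕ) :
    ∑ s ∈ Finset.range (p + q), F s = (∑ s ∈ Finset.range p, F s) + ∑ t ∈ Finset.range q, F (p + t) := by
  induction q with
  | zero => simp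
  | succ q ih =>
      rw [← Nat.add_assoc, Finset.sum_range_succ, ih, Finset.sum_range_succ, Nat.add_assoc]

lemma sum_block (F : ℕ → ℕ) (a B : ℕ) :
    ∑ s ∈ Finset.range (a * B), F s = ∑ e ∈ Finset.range a, ∑ t ∈ Finset.range B, F (e * B + t) := by
  induction a with
  | zero => simp
  | succ a ih =>
      rw [Nat.succ_mul, sum_range_add, ih, Finset.sum_range_succ]

lemma padProd_split {m e t : ℕ} (ht : t < 10 ^ m) (he : e < 10) :
    padProd (m + 1) (e * 10 ^ m + t) = e * padProd m t := by
  unfold padProd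
  rw [Finset.prod_range_succ]
  have hp : 0 < (10:ℕ) ^ m := Nat.pow_pos (n := m) (by norm_num)
  have h1 : (e * 10 ^ m + t) / 10 ^ m % 10 = e := by
    rw [add_comm, mul_comm, Nat.add_mul_div_left _ _ hp, Nat.div_eq_of_lt ht]
    omega
  have h2 : ∀ k ∈ Finset.range m, (e * 10 ^ m + t) / 10 ^ k % 10 = t / 10 ^ k % 10 := by
    intro k hk
    rw [Finset.mem_range] at hk
    have hpow : (10:ℕ) ^ m = 10 ^ k * (10 ^ (m - k)) := by
      rw [← pow_add]; congr 1; omega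
    have key : (e * 10 ^ m + t) / 10 ^ k = 10 ^ (m - k) * e + t / 10 ^ k := by
      rw [hpow, ← mul_assoc, mul_comm e, mul_assoc,
        Nat.mul_add_div (Nat.pow_pos (n := k) (by norm_num))]
      ring
    rw [key]
    have hd : (10:ℕ) ∣ 10 ^ (m - k) * e :=
      Dvd.dvd.mul_right (dvd_pow_self 10 (by omega : m - k ≠ 0)) e
    obtain ⟨c, hc⟩ := hd
    rw [hc, Nat.mul_add_mod]
  rw [Finset.prod_congr rfl h2, h1, mul_comm]

lemma g_split {m e t : ℕ} (hm : 1 ≤ m) (ht : t < 10 ^ m) (he : e < 10) :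
    g (m + 1) (e * 10 ^ m + t) = e * g m t := by
  have hpar : Odd (e * 10 ^ m + t) ↔ Odd t := by
    have : Even ((10:ℕ) ^ m) := by
      rcases Nat.exists_eq_add_of_le hm with ⟨c, rfl⟩
      rw [pow_add]
      exact (by decide : Even ((10:ℕ)^1)).mul_right _
    have hEe : Even (e * 10 ^ m) := this.mul_left e
    rw [add_comm, Nat.odd_add]
    simp [hEe]
  unfold g
  by_cases h : Odd t
  · rw [if_pos (hpar.mpr h), if_pos h, padProd_split ht he]
  · rw [if_neg (fun hh => h (hpar.mp hh)), if_neg h, mul_zero]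

lemma H_split {m a r : ℕ} (hm : 1 ≤ m) (ha : a ≤ 9) (hr : r ≤ 10 ^ m) :
    H (m + 1) (a * 10 ^ m + r) =
      (∑ e ∈ Finset.range a, e) * H m (10 ^ m) + a * H m r := by
  unfold H
  rw [sum_range_add, sum_block]
  congr 1
  · rw [Finset.sum_mul]
    refine Finset.sum_congr rfl fun e hee => ?_
    rw [Finset.mem_range] at hee
    rw [Finset.mul_sum]
    exact Finset.sum_congr rfl fun t htt =>
      g_split hm (Finset.mem_range.mp htt) (by omega)
  · rw [Finset.mul_sum]
    refine Finset.sum_congr rfl fun t htt => ?_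
    rw [Finset.mem_range] at htt
    exact g_split hm (lt_of_lt_of_le htt hr) (by omega)

lemma H_one {r : ℕ} (hr : r ≤ 10) : H 1 r = ∑ s ∈ Finset.range r, if Odd s then s else 0 := by
  unfold H g padProd
  refine Finset.sum_congr rfl fun s hs => ?_
  have h : s % 10 = s := Nat.mod_eq_of_lt (lt_of_lt_of_le (Finset.mem_range.mp hs) hr)
  simp [h]

lemma H_full : ∀ m, H (m + 1) (10 ^ (m + 1)) = 25 * 45 ^ m := by
  intro m
  induction m with
  | zero =>
      show H 1 (10 ^ 1) = 25 * 45 ^ 0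
      norm_num
      rw [H_one le_rfl]
      decide
  | succ m ih =>
      have h : (10:ℕ) ^ (m + 2) = 9 * 10 ^ (m + 1) + 10 ^ (m + 1) := by ring
      rw [h, H_split (by omega) (by omega) le_rfl, ih]
      norm_num [Finset.sum_range_succ]
      ring

lemma qgauss (a : ℕ) : (∑ e ∈ Finset.range a, (e:ℚ)) = a * (a - 1) / 2 := by
  induction a with
  | zero => simp
  | succ a ih =>
      rw [Finset.sum_range_succ, ih]
      push_cast
      ring

lemma geo (n : ℕ) : ∑ k ∈ Finset.range n, 9 * 10 ^ k = 10 ^ n - 1 := by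
  induction n with
  | zero => simp
  | succ n ih =>
      rw [Finset.sum_range_succ, ih, pow_succ]
      have : 1 ≤ (10:ℕ) ^ n := Nat.one_le_pow _ _ (by norm_num)
      omega

lemma digit_sum_lt {m : ℕ} {d : ℕ → ℕ} (hdig : ∀ k ≤ m, d k ≤ 9) :
    ∑ k ∈ Finset.range (m + 1), d k * 10 ^ k < 10 ^ (m + 1) := by
  have h : ∑ k ∈ Finset.range (m + 1), d k * 10 ^ k ≤ ∑ k ∈ Finset.range (m + 1), 9 * 10 ^ k := by
    refine Finset.sum_le_sum fun k hk => ?_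
    exact Nat.mul_le_mul_right _ (hdig k (by simpa using Finset.mem_range_succ_iff.mp hk))
  rw [geo] at h
  have : 1 ≤ (10:ℕ) ^ (m + 1) := Nat.one_le_pow _ _ (by norm_num)
  omega

lemma G_closed : ∀ m (d : ℕ → ℕ), (∀ k ≤ m, d k ≤ 9) → Odd (d 0) →
    ((H (m + 1) ((∑ k ∈ Finset.range (m + 1), d k * 10 ^ k) + 1) : ℕ) : ℚ) =
      (∑ k ∈ Finset.Icc 1 m, (∏ j ∈ Finset.Icc (k + 1) m, (d j : ℚ))
          * (5 ^ (k + 1) * 9 ^ (k - 1) * (d k : ℚ) * ((d k : ℚ) - 1) / 2))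
      + (∏ i ∈ Finset.Icc 1 m, (d i : ℚ)) * (((d 0 : ℚ) + 1) / 2) ^ 2 := by
  intro m
  induction m with
  | zero =>
      intro d hdig hodd
      simp only [zero_add, Finset.range_one, Finset.sum_singleton, pow_zero, mul_one]
      rw [H_one (by have := hdig 0 le_rfl; omega)]
      obtain ⟨c, hc⟩ := hodd
      have hc4 : c ≤ 4 := by have := hdig 0 le_rfl; omega
      rw [hc]
      have : Finset.Icc 1 0 = (∅ : Finset ℕ) := by decide
      rw [this, Finset.sum_empty, Finset.prod_empty]
      interval_cases c <;> norm_num [Finset.sum_range_succ, Nat.odd_iff]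
  | succ m ih =>
      intro d hdig hodd
      have hd9 : ∀ k ≤ m, d k ≤ 9 := fun k hk => hdig k (le_trans hk (Nat.le_succ m))
      have hr : ∑ k ∈ Finset.range (m + 1), d k * 10 ^ k < 10 ^ (m + 1) := digit_sum_lt hd9
      rw [Finset.sum_range_succ]
      have harr : (∑ k ∈ Finset.range (m + 1), d k * 10 ^ k) + d (m + 1) * 10 ^ (m + 1) + 1
          = d (m + 1) * 10 ^ (m + 1) + ((∑ k ∈ Finset.range (m + 1), d k * 10 ^ k) + 1) := by ring
      rw [harr, H_split (by omega) (hdig (m + 1) le_rfl) (by omega), H_full m]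
      push_cast
      rw [qgauss, ih d hd9 hodd]
      rw [Finset.sum_Icc_succ_top (by omega : 1 ≤ m + 1),
        Finset.prod_Icc_succ_top (by omega : 1 ≤ m + 1)]
      have hempty : Finset.Icc (m + 1 + 1) (m + 1) = (∅ : Finset ℕ) := Finset.Icc_eq_empty (by omega)
      rw [hempty, Finset.prod_empty]
      have hsum : ∑ k ∈ Finset.Icc 1 m, (∏ j ∈ Finset.Icc (k + 1) (m + 1), (d j : ℚ))
            * (5 ^ (k + 1) * 9 ^ (k - 1) * (d k : ℚ) * ((d k : ℚ) - 1) / 2)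
          = (d (m + 1) : ℚ) * ∑ k ∈ Finset.Icc 1 m, (∏ j ∈ Finset.Icc (k + 1) m, (d j : ℚ))
            * (5 ^ (k + 1) * 9 ^ (k - 1) * (d k : ℚ) * ((d k : ℚ) - 1) / 2) := by
        rw [Finset.mul_sum]
        refine Finset.sum_congr rfl fun k hk => ?_
        have hk2 := (Finset.mem_Icc.mp hk).2
        rw [Finset.prod_Icc_succ_top (by omega : k + 1 ≤ m + 1)]
        ring
      rw [hsum]
      have h45 : (45 : ℚ) ^ m = 5 ^ m * 9 ^ m := by rw [← mul_pow]; norm_num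
      have hm1 : m + 1 - 1 = m := by omega
      rw [hm1, h45]
      ring

lemma padProd_succ (m q : ℕ) : padProd (m + 1) q = q % 10 * padProd m (q / 10) := by
  unfold padProd
  rw [Finset.prod_range_succ']
  simp only [pow_zero, Nat.div_one]
  rw [mul_comm]
  congr 1
  refine Finset.prod_congr rfl fun k _ => ?_
  rw [Nat.div_div_eq_div_mul, ← pow_succ']

lemma padProd_zero_of_lt {m q : ℕ} (h : q < 10 ^ m) : padProd (m + 1) q = 0 := by
  unfold padProd
  refine Finset.prod_eq_zero (Finset.self_mem_range_succ m) ?_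
  rw [Nat.div_eq_of_lt h]
  rfl

lemma digProd_eq_padProd : ∀ m q, 10 ^ m ≤ q → q < 10 ^ (m + 1) → digProd q = padProd (m + 1) q := by
  intro m
  induction m with
  | zero =>
      intro q h1 h2
      simp only [pow_zero] at h1
      have h2' : q < 10 := by simpa using h2
      unfold digProd
      rw [Nat.digits_def' (by norm_num : 1 < 10) (by omega), Nat.div_eq_of_lt h2',
        Nat.digits_zero, List.prod_cons, List.prod_nil, padProd_succ,
        Nat.div_eq_of_lt h2']
      simp [padProd, Nat.mod_eq_of_lt h2']
  | succ m ih =>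
      intro q h1 h2
      have hq : 0 < q := lt_of_lt_of_le (Nat.pow_pos (by norm_num)) h1
      unfold digProd at *
      rw [Nat.digits_def' (by norm_num : 1 < 10) hq, List.prod_cons]
      have hdiv1 : 10 ^ m ≤ q / 10 := by
        rw [Nat.le_div_iff_mul_le (by norm_num)]
        calc 10 ^ m * 10 = 10 ^ (m + 1) := by rw [pow_succ]
        _ ≤ q := h1
      have hdiv2 : q / 10 < 10 ^ (m + 1) := by
        rw [Nat.div_lt_iff_lt_mul (by norm_num)]
        calc q < 10 ^ (m + 2) := h2
        _ = 10 ^ (m + 1) * 10 := by rw [pow_succ]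
      rw [ih (q / 10) hdiv1 hdiv2, ← padProd_succ]

lemma S_split {m N : ℕ} (h1 : 10 ^ m ≤ N) (h2 : N < 10 ^ (m + 1)) :
    S (N + 1) = S (10 ^ m) + H (m + 1) (N + 1) := by
  have hN : N + 1 = 10 ^ m + (N + 1 - 10 ^ m) := by omega
  unfold S H
  rw [hN, sum_range_add, sum_range_add]
  have hz : ∑ s ∈ Finset.range (10 ^ m), g (m + 1) s = 0 := by
    refine Finset.sum_eq_zero fun s hs => ?_
    unfold g
    rw [padProd_zero_of_lt (Finset.mem_range.mp hs)]
    simp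
  rw [hz, zero_add]
  congr 1
  refine Finset.sum_congr rfl fun t ht => ?_
  have ht' := Finset.mem_range.mp ht
  unfold f g
  rw [digProd_eq_padProd m _ (Nat.le_add_right _ _) (by omega)]

lemma S_full : ∀ m, ((S (10 ^ m) : ℕ) : ℚ) = 25 / 44 * (45 ^ m - 1) := by
  intro m
  induction m with
  | zero => norm_num [S, f, Finset.sum_range_succ]
  | succ m ih =>
      have h1 : (10:ℕ) ^ m ≤ 10 ^ (m + 1) - 1 := by
        have h := Nat.pow_le_pow_right (by norm_num : 1 ≤ 10) (Nat.le_succ m)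
        have h2 : 1 ≤ (10:ℕ) ^ m := Nat.one_le_pow _ _ (by norm_num)
        have h3 : (10:ℕ) ^ (m+1) = 10 * 10 ^ m := by rw [pow_succ]; ring
        omega
      have h0 : 1 ≤ (10:ℕ) ^ (m + 1) := Nat.one_le_pow _ _ (by norm_num)
      have key : S (10 ^ (m + 1)) = S (10 ^ m) + H (m + 1) (10 ^ (m + 1)) := by
        have := S_split (m := m) (N := 10 ^ (m + 1) - 1) h1 (by omega)
        rw [Nat.sub_add_cancel h0] at this
        exact this
      rw [key, H_full m]
      push_cast
      rw [ih]
      ring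

lemma b_eq (n : ℕ) : b n = S (2 * n) := by
  induction n with
  | zero => simp [b, S]
  | succ n ih =>
      have hb : b (n + 1) = b n + digProd (2 * (n + 1) - 1) := by
        unfold b
        rw [Finset.sum_Icc_succ_top (by omega : 1 ≤ n + 1)]
      have h2 : 2 * (n + 1) = (2 * n) + 1 + 1 := by ring
      rw [hb, ih, h2]
      unfold S
      rw [Finset.sum_range_succ, Finset.sum_range_succ]
      have he : f (2 * n) = 0 := by
        unfold f
        simp [Nat.odd_iff, Nat.mul_mod_right]
      have ho : f (2 * n + 1) = digProd (2 * n + 1) := by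
        unfold f
        simp [Nat.odd_iff, Nat.add_mul_mod_self_left]
      rw [he, ho]
      simp

end S5

/-- Closed formula for `b(n)` in terms of the decimal digits `d 0, ..., d m` of `2n - 1`
(with `d m ≥ 1`, all digits `≤ 9` and `d 0` odd). -/
theorem stmt5 (n m : ℕ) (d : ℕ → ℕ) (hn : 1 ≤ n)
    (hrep : 2 * n - 1 = ∑ k ∈ Finset.range (m + 1), d k * 10 ^ k)
    (hlead : 1 ≤ d m) (hdig : ∀ k ≤ m, d k ≤ 9) (hodd : Odd (d 0)) :
    (b n : ℚ) =
      25 / 44 * (45 ^ m - 1)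
      + ∑ k ∈ Finset.Icc 1 m,
          (∏ j ∈ Finset.Icc (k + 1) m, (d j : ℚ))
            * (5 ^ (k + 1) * 9 ^ (k - 1) * (d k : ℚ) * ((d k : ℚ) - 1) / 2)
      + (∏ i ∈ Finset.Icc 1 m, (d i : ℚ)) * (((d 0 : ℚ) + 1) / 2) ^ 2 := by
  have hNlt : 2 * n - 1 < 10 ^ (m + 1) := hrep ▸ S5.digit_sum_lt hdig
  have hNge : 10 ^ m ≤ 2 * n - 1 := by
    have h1 : d m * 10 ^ m ≤ ∑ k ∈ Finset.range (m + 1), d k * 10 ^ k :=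
      Finset.single_le_sum (f := fun k => d k * 10 ^ k) (fun k _ => Nat.zero_le _)
        (Finset.self_mem_range_succ m)
    have h2 : 10 ^ m ≤ d m * 10 ^ m := Nat.le_mul_of_pos_left _ hlead
    omega
  have h2n : 2 * n = (2 * n - 1) + 1 := by omega
  rw [S5.b_eq n, h2n, S5.S_split hNge hNlt]
  push_cast
  rw [S5.S_full m, hrep, S5.G_closed m d hdig hodd]
  ring
end

section
/- For any digit string: if 2n has m+2 decimal digits with leading digit a_{m+1}, and 2n₀ = 2n - a_{m+1}·10^{m+1} has m+1 digits all nonzero leading part, then the sum of products of digits of even numbers in [10^{m+1}, 2n] equals a_{m+1}(a_{m+1}-1)·2·5^{m+1}·9^m plus a_{m+1} times the sum of products of digits of even numbers in [10^m, 2n₀]. -/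
open Finset

lemma dlen_le {q K : ℕ} (hq : q < 10 ^ K) : (Nat.digits 10 q).length ≤ K := by
  rcases eq_or_ne q 0 with rfl | h
  · simp
  · rw [Nat.digits_len 10 q (by norm_num) h]
    have := (Nat.log_lt_iff_lt_pow (by norm_num : 1 < 10) h).mpr hq
    omega

lemma dlen_ge {q k : ℕ} (hq : 10 ^ k ≤ q) : k + 1 ≤ (Nat.digits 10 q).length := by
  have h : q ≠ 0 := by
    have : 0 < 10 ^ k := by positivity
    omega
  rw [Nat.digits_len 10 q (by norm_num) h]
  have := (Nat.le_log_iff_pow_le (by norm_num : 1 < 10) h).mpr hq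
  omega

lemma digits_add_mul_pow {q K a : ℕ} (hq : q < 10 ^ K) (ha : 0 < a) (ha9 : a < 10) :
    Nat.digits 10 (q + a * 10 ^ K) =
      Nat.digits 10 q ++ List.replicate (K - (Nat.digits 10 q).length) 0 ++ [a] := by
  have hlen := dlen_le hq
  have hA : Nat.digits 10 a = [a] := by
    rw [Nat.digits_def' (by norm_num : 1 < 10) ha, Nat.div_eq_of_lt ha9,
      Nat.mod_eq_of_lt ha9, Nat.digits_zero]
  rw [← hA, Nat.digits_append_zeroes_append_digits (by norm_num) ha]
  congr 1
  rw [Nat.add_sub_cancel' hlen]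
  ring

lemma digProd_add_mul_pow {q K a : ℕ} (hq : q < 10 ^ K) (ha : 0 < a) (ha9 : a < 10) :
    digProd (q + a * 10 ^ K) = a * digProd (q + 10 ^ K) := by
  have h1 := digits_add_mul_pow hq ha ha9
  have h2 := digits_add_mul_pow hq one_pos (by norm_num : (1:ℕ) < 10)
  rw [one_mul] at h2
  unfold digProd
  rw [h1, h2]
  simp [List.prod_append]
  ring

lemma pad_zero {q k : ℕ} (hq : q < 10 ^ k) : digProd (q + 10 ^ (k + 1)) = 0 := by
  have hq' : q < 10 ^ (k + 1) := lt_of_lt_of_le hq (Nat.pow_le_pow_right (by norm_num) (by omega))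
  have h2 := digits_add_mul_pow hq' one_pos (by norm_num : (1:ℕ) < 10)
  rw [one_mul] at h2
  have hlen : (Nat.digits 10 q).length ≤ k := dlen_le hq
  unfold digProd
  rw [h2]
  have : k + 1 - (Nat.digits 10 q).length = (k - (Nat.digits 10 q).length) + 1 := by omega
  rw [this, List.replicate_succ]
  simp

lemma pad_eq {q k : ℕ} (hlo : 10 ^ k ≤ q) (hhi : q < 10 ^ (k + 1)) :
    digProd (q + 10 ^ (k + 1)) = digProd q := by
  have h2 := digits_add_mul_pow hhi one_pos (by norm_num : (1:ℕ) < 10)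
  rw [one_mul] at h2
  have hl1 : (Nat.digits 10 q).length ≤ k + 1 := dlen_le hhi
  have hl2 : k + 1 ≤ (Nat.digits 10 q).length := dlen_ge hlo
  unfold digProd
  rw [h2]
  have : k + 1 - (Nat.digits 10 q).length = 0 := by omega
  rw [this]
  simp

lemma blocksum (k a r : ℕ) (ha : 0 < a) (ha9 : a < 10) (hr : r < 10 ^ (k + 1)) :
    ∑ p ∈ (Finset.Icc (a * 10 ^ (k + 1)) (a * 10 ^ (k + 1) + r)).filter (fun p => Even p),
      digProd p
      = a * ∑ q ∈ (Finset.Icc (10 ^ k) r).filter (fun q => Even q), digProd q := by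
  have hc2 : 2 ∣ a * 10 ^ (k + 1) := by
    refine Dvd.dvd.mul_left ?_ a
    exact dvd_pow (by norm_num) (by omega)
  obtain ⟨c, hc⟩ := hc2
  have step1 :
      ∑ q ∈ (Finset.Icc 0 r).filter (fun q => Even q), digProd (q + a * 10 ^ (k + 1))
      = ∑ p ∈ (Finset.Icc (a * 10 ^ (k + 1)) (a * 10 ^ (k + 1) + r)).filter (fun p => Even p),
        digProd p := by
    refine Finset.sum_nbij' (fun q => q + a * 10 ^ (k + 1)) (fun p => p - a * 10 ^ (k + 1))
      ?_ ?_ ?_ ?_ ?_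
    · intro x hx
      simp only [Finset.mem_filter, Finset.mem_Icc, Nat.even_iff] at hx ⊢
      omega
    · intro x hx
      simp only [Finset.mem_filter, Finset.mem_Icc, Nat.even_iff] at hx ⊢
      omega
    · intro x hx
      omega
    · intro x hx
      simp only [Finset.mem_filter, Finset.mem_Icc] at hx
      omega
    · intro x hx
      rfl
  rw [← step1]
  have step2 : ∀ q ∈ (Finset.Icc 0 r).filter (fun q => Even q),
      digProd (q + a * 10 ^ (k + 1)) = a * digProd (q + 10 ^ (k + 1)) := by
    intro q hq
    simp only [Finset.mem_filter, Finset.mem_Icc] at hq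
    exact digProd_add_mul_pow (by omega) ha ha9
  rw [Finset.sum_congr rfl step2, ← Finset.mul_sum]
  congr 1
  rw [← Finset.sum_subset (Finset.filter_subset_filter _
        (Finset.Icc_subset_Icc (Nat.zero_le _) le_rfl))]
  · refine Finset.sum_congr rfl ?_
    intro q hq
    simp only [Finset.mem_filter, Finset.mem_Icc] at hq
    exact pad_eq hq.1.1 (by omega)
  · intro q hq hq'
    simp only [Finset.mem_filter, Finset.mem_Icc] at hq hq'
    have hqk : q < 10 ^ k := by
      by_contra hcon
      exact hq' ⟨⟨by omega, hq.1.2⟩, hq.2⟩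
    exact pad_zero hqk

def T (m : ℕ) : ℕ :=
  ∑ q ∈ (Finset.Icc (10 ^ m) (10 ^ (m + 1) - 1)).filter (fun q => Even q), digProd q

lemma T_zero : T 0 = 20 := by
  have h : (Finset.Icc (10 ^ 0) (10 ^ (0 + 1) - 1)).filter (fun q => Even q)
      = ({2, 4, 6, 8} : Finset ℕ) := by decide
  rw [T, h]
  simp [digProd]

lemma mainsum (k : ℕ) :
    ∀ d, 1 ≤ d → d < 10 → ∀ r, r < 10 ^ (k + 1) →
    2 * ∑ p ∈ (Finset.Icc (10 ^ (k + 1)) (d * 10 ^ (k + 1) + r)).filter (fun p => Even p),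
        digProd p
      = d * (d - 1) * T k
        + 2 * d * ∑ q ∈ (Finset.Icc (10 ^ k) r).filter (fun q => Even q), digProd q := by
  refine Nat.le_induction ?_ ?_
  · intro _ r hr
    have hb := blocksum k 1 r one_pos (by norm_num) hr
    rw [one_mul] at hb
    simp only [one_mul]
    rw [hb]
    ring_nf
  · intro d hd ih hd10 r hr
    have h10 : 0 < 10 ^ (k + 1) := by positivity
    have hrr : (10 ^ (k + 1) - 1) < 10 ^ (k + 1) := by omega
    have ihfull := ih (by omega) (10 ^ (k + 1) - 1) hrr
    have hsplit : (Finset.Icc (10 ^ (k + 1)) ((d + 1) * 10 ^ (k + 1) + r)).filter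
          (fun p => Even p)
        = (Finset.Icc (10 ^ (k + 1)) (d * 10 ^ (k + 1) + (10 ^ (k + 1) - 1))).filter
            (fun p => Even p)
          ∪ (Finset.Icc ((d + 1) * 10 ^ (k + 1)) ((d + 1) * 10 ^ (k + 1) + r)).filter
            (fun p => Even p) := by
      ext p
      simp only [Finset.mem_union, Finset.mem_filter, Finset.mem_Icc]
      have hmul : d * 10 ^ (k + 1) + 10 ^ (k + 1) = (d + 1) * 10 ^ (k + 1) := by ring
      constructor
      · rintro ⟨⟨h1, h2⟩, h3⟩
        rcases le_or_gt ((d + 1) * 10 ^ (k + 1)) p with h | h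
        · exact Or.inr ⟨⟨h, h2⟩, h3⟩
        · exact Or.inl ⟨⟨h1, by omega⟩, h3⟩
      · rintro (⟨⟨h1, h2⟩, h3⟩ | ⟨⟨h1, h2⟩, h3⟩)
        · exact ⟨⟨h1, by omega⟩, h3⟩
        · refine ⟨⟨?_, h2⟩, h3⟩
          have : 10 ^ (k + 1) ≤ (d + 1) * 10 ^ (k + 1) := Nat.le_mul_of_pos_left _ (by omega)
          omega
    have hdisj : Disjoint
        ((Finset.Icc (10 ^ (k + 1)) (d * 10 ^ (k + 1) + (10 ^ (k + 1) - 1))).filter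
          (fun p => Even p))
        ((Finset.Icc ((d + 1) * 10 ^ (k + 1)) ((d + 1) * 10 ^ (k + 1) + r)).filter
          (fun p => Even p)) := by
      rw [Finset.disjoint_left]
      intro p hp hp'
      simp only [Finset.mem_filter, Finset.mem_Icc] at hp hp'
      have hmul : d * 10 ^ (k + 1) + 10 ^ (k + 1) = (d + 1) * 10 ^ (k + 1) := by ring
      have := hp.1.2
      have := hp'.1.1
      omega
    have hb := blocksum k (d + 1) r (by omega) (by omega) hr
    have hT : ∑ q ∈ (Finset.Icc (10 ^ k) (10 ^ (k + 1) - 1)).filter (fun q => Even q),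
        digProd q = T k := rfl
    rw [hsplit, Finset.sum_union hdisj, Nat.mul_add, hb, ihfull, hT]
    obtain ⟨e, rfl⟩ : ∃ e, d = e + 1 := ⟨d - 1, by omega⟩
    simp only [Nat.add_sub_cancel]
    ring

lemma T_eq (m : ℕ) : T m = 20 * 45 ^ m := by
  induction m with
  | zero => simpa using T_zero
  | succ m ih =>
    have h10 : 0 < 10 ^ (m + 1) := by positivity
    have hrr : (10 ^ (m + 1) - 1) < 10 ^ (m + 1) := by omega
    have h := mainsum m 9 (by norm_num) (by norm_num) (10 ^ (m + 1) - 1) hrr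
    have hT : T (m + 1)
        = ∑ p ∈ (Finset.Icc (10 ^ (m + 1)) (9 * 10 ^ (m + 1) + (10 ^ (m + 1) - 1))).filter
            (fun p => Even p), digProd p := by
      have hend : (10:ℕ) ^ (m + 1 + 1) - 1 = 9 * 10 ^ (m + 1) + (10 ^ (m + 1) - 1) := by
        have h2 : (10:ℕ) ^ (m + 1 + 1) = 10 * 10 ^ (m + 1) := by ring
        omega
      rw [T, hend]
    have hT' : ∑ q ∈ (Finset.Icc (10 ^ m) (10 ^ (m + 1) - 1)).filter (fun q => Even q),
        digProd q = T m := rfl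
    rw [hT', ih] at h
    have : 2 * T (m + 1) = 2 * (20 * 45 ^ (m + 1)) := by
      rw [hT, h]
      ring
    omega

/-- Decomposition by leading digit: if `2n = 2n₀ + d·10^(m+1)` with `1 ≤ d ≤ 9` and
`10^m ≤ 2n₀ < 10^(m+1)`, then the sum of the digit products of the even numbers in
`[10^(m+1), 2n]` equals `d(d-1)·2·5^(m+1)·9^m` plus `d` times the sum of the digit
products of the even numbers in `[10^m, 2n₀]`. -/
theorem stmt12 (n n₀ m d : ℕ) (hd1 : 1 ≤ d) (hd9 : d ≤ 9)
    (hrep : 2 * n = 2 * n₀ + d * 10 ^ (m + 1))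
    (hlo : 10 ^ m ≤ 2 * n₀) (hhi : 2 * n₀ < 10 ^ (m + 1)) :
    ∑ p ∈ (Finset.Icc (10 ^ (m + 1)) (2 * n)).filter (fun p => Even p), digProd p
      = d * (d - 1) * 2 * 5 ^ (m + 1) * 9 ^ m
        + d * ∑ p ∈ (Finset.Icc (10 ^ m) (2 * n₀)).filter (fun p => Even p), digProd p := by
  have key := mainsum m d hd1 (by omega) (2 * n₀) hhi
  rw [T_eq] at key
  rw [show 2 * n = d * 10 ^ (m + 1) + 2 * n₀ from by omega]
  have h45 : (45 : ℕ) ^ m = 5 ^ m * 9 ^ m := by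
    rw [← mul_pow]
    norm_num
  set e := d - 1 with he
  set S := ∑ p ∈ (Finset.Icc (10 ^ m) (2 * n₀)).filter (fun p => Even p), digProd p with hS
  have h2 : 2 * (d * e * 2 * 5 ^ (m + 1) * 9 ^ m + d * S)
      = d * e * (20 * 45 ^ m) + 2 * d * S := by
    rw [h45]
    ring
  omega
end

section
/- For all n ≥ 5, a(n) < b(n), where a(n) and b(n) are the sums of the products of the decimal digits of the first n even and first n odd positive numbers respectively. -/
/-- Partial sums of `digProd`. -/
def S (n : ℕ) : ℕ := ∑ k ∈ Finset.range n, digProd k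

lemma digProd_eq_s18 (q e : ℕ) (he : e < 10) (hpos : 0 < 10 * q + e) :
    digProd (10 * q + e) = e * digProd q := by
  have h1 : (10 * q + e) % 10 = e := by omega
  have h2 : (10 * q + e) / 10 = q := by omega
  unfold digProd
  rw [Nat.digits_def' (by norm_num : 1 < 10) hpos, h1, h2, List.prod_cons]

lemma decade (q : ℕ) : 45 * digProd q ≤ ∑ e ∈ Finset.range 10, digProd (10 * q + e) := by
  have h : ∑ e ∈ Finset.range 10, e * digProd q
      ≤ ∑ e ∈ Finset.range 10, digProd (10 * q + e) := by
    apply Finset.sum_le_sum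
    intro e he
    rcases Nat.eq_zero_or_pos e with h0 | hpos
    · simp [h0]
    · rw [digProd_eq_s18 q e (Finset.mem_range.mp he) (by omega)]
  calc 45 * digProd q = (∑ e ∈ Finset.range 10, e) * digProd q := by norm_num
    _ = ∑ e ∈ Finset.range 10, e * digProd q := by rw [Finset.sum_mul]
    _ ≤ _ := h

lemma S_ten (q : ℕ) : 45 * S q ≤ S (10 * q) := by
  induction q with
  | zero => simp [S]
  | succ q ih =>
    have h10 : 10 * (q + 1) = 10 * q + 10 := by ring
    rw [h10]
    have split : S (10 * q + 10)
        = S (10 * q) + ∑ e ∈ Finset.range 10, digProd (10 * q + e) := by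
      unfold S
      rw [Finset.range_eq_Ico,
        ← Finset.sum_Ico_consecutive _ (Nat.zero_le _) (by omega : 10 * q ≤ 10 * q + 10)]
      congr 1
      rw [Finset.sum_Ico_eq_sum_range]
      simp
      rw [Finset.sum_Ico_eq_sum_range]
      simp
    rw [split]
    have hS : S (q + 1) = S q + digProd q := by
      unfold S; rw [Finset.sum_range_succ]
    rw [hS, Nat.mul_add]
    have := decade q
    omega

lemma S_pos (m : ℕ) (hm : 1 ≤ m) : 1 ≤ S m := by
  have : digProd 0 ≤ S m :=
    Finset.single_le_sum (f := digProd) (fun i _ => Nat.zero_le _)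
      (Finset.mem_range.mpr hm)
  simpa [digProd] using this

lemma digProd_small (d : ℕ) (h1 : 1 ≤ d) (h9 : d ≤ 9) : digProd d = d := by
  have h := digProd_eq_s18 0 d (by omega) (by omega)
  simpa [digProd] using h

lemma le_S (m : ℕ) (h : m ≤ 10) : m ≤ S m := by
  induction m with
  | zero => simp [S]
  | succ k ih =>
    have hS : S (k + 1) = S k + digProd k := by
      unfold S; rw [Finset.sum_range_succ]
    rcases Nat.eq_zero_or_pos k with h0 | hpos
    · subst h0; simp [hS, S, digProd]
    · have hk : digProd k = k := digProd_small k hpos (by omega)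
      have := ih (by omega)
      omega

lemma digProd_le_S : ∀ m, 1 ≤ m → digProd m ≤ S m := by
  intro m
  induction m using Nat.strong_induction_on with
  | _ m ih =>
    intro hm
    by_cases hq : m / 10 = 0
    · have h9 : m ≤ 9 := by omega
      rw [digProd_small m hm (by omega)]
      exact le_S m (by omega)
    · set q := m / 10 with hqdef
      set d := m % 10 with hddef
      have hq1 : 1 ≤ q := Nat.pos_of_ne_zero hq
      have hqm : q < m := by omega
      have h1 : digProd m = d * digProd q := by
        have hm' : m = 10 * q + d := by omega
        rw [hm']; exact digProd_eq_s18 q d (by omega) (by omega)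
      have h2 : digProd q ≤ S q := ih q hqm hq1
      have h3 : 45 * S q ≤ S (10 * q) := S_ten q
      have h4 : S (10 * q) ≤ S m := by
        apply Finset.sum_le_sum_of_subset
        exact Finset.range_subset_range.mpr (by omega)
      have h5 : d * digProd q ≤ 9 * S q :=
        Nat.mul_le_mul (by omega) h2
      omega

lemma key : ∀ n, b n + (n % 5) * digProd (n / 5) = a n + 5 * S (n / 5) := by
  intro n
  induction n with
  | zero => simp [a, b, S]
  | succ n ih =>
    have ha : a (n + 1) = a n + digProd (2 * (n + 1)) := by
      unfold a; rw [Finset.sum_Icc_succ_top (by omega : 1 ≤ n + 1)]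
    have hb : b (n + 1) = b n + digProd (2 * (n + 1) - 1) := by
      unfold b; rw [Finset.sum_Icc_succ_top (by omega : 1 ≤ n + 1)]
    have hr : n % 5 = 0 ∨ n % 5 = 1 ∨ n % 5 = 2 ∨ n % 5 = 3 ∨ n % 5 = 4 := by omega
    have hq : n = 5 * (n / 5) + n % 5 := by omega
    set q := n / 5 with hqdef
    rcases hr with h | h | h | h | h
    · -- r = 0
      have e1 : 2 * (n + 1) - 1 = 10 * q + 1 := by omega
      have e2 : 2 * (n + 1) = 10 * q + 2 := by omega
      have e3 : (n + 1) / 5 = q := by omega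
      have e4 : (n + 1) % 5 = 1 := by omega
      rw [ha, hb, e1, e2, e3, e4, digProd_eq_s18 q 1 (by omega) (by omega),
        digProd_eq_s18 q 2 (by omega) (by omega)]
      rw [h] at ih
      omega
    · have e1 : 2 * (n + 1) - 1 = 10 * q + 3 := by omega
      have e2 : 2 * (n + 1) = 10 * q + 4 := by omega
      have e3 : (n + 1) / 5 = q := by omega
      have e4 : (n + 1) % 5 = 2 := by omega
      rw [ha, hb, e1, e2, e3, e4, digProd_eq_s18 q 3 (by omega) (by omega),
        digProd_eq_s18 q 4 (by omega) (by omega)]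
      rw [h] at ih
      omega
    · have e1 : 2 * (n + 1) - 1 = 10 * q + 5 := by omega
      have e2 : 2 * (n + 1) = 10 * q + 6 := by omega
      have e3 : (n + 1) / 5 = q := by omega
      have e4 : (n + 1) % 5 = 3 := by omega
      rw [ha, hb, e1, e2, e3, e4, digProd_eq_s18 q 5 (by omega) (by omega),
        digProd_eq_s18 q 6 (by omega) (by omega)]
      rw [h] at ih
      omega
    · have e1 : 2 * (n + 1) - 1 = 10 * q + 7 := by omega
      have e2 : 2 * (n + 1) = 10 * q + 8 := by omega
      have e3 : (n + 1) / 5 = q := by omega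
      have e4 : (n + 1) % 5 = 4 := by omega
      rw [ha, hb, e1, e2, e3, e4, digProd_eq_s18 q 7 (by omega) (by omega),
        digProd_eq_s18 q 8 (by omega) (by omega)]
      rw [h] at ih
      omega
    · -- r = 4
      have e1 : 2 * (n + 1) - 1 = 10 * q + 9 := by omega
      have e2 : 2 * (n + 1) = 10 * (q + 1) + 0 := by omega
      have e3 : (n + 1) / 5 = q + 1 := by omega
      have e4 : (n + 1) % 5 = 0 := by omega
      have hS : S (q + 1) = S q + digProd q := by
        unfold S; rw [Finset.sum_range_succ]
      rw [ha, hb, e1, e2, e3, e4, digProd_eq_s18 q 9 (by omega) (by omega),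
        digProd_eq_s18 (q + 1) 0 (by omega) (by omega), hS]
      rw [h] at ih
      omega

/-- For all `n ≥ 5`, `a(n) < b(n)`. -/
theorem stmt18 (n : ℕ) (hn : 5 ≤ n) : a n < b n := by
  have hk := key n
  have hq1 : 1 ≤ n / 5 := by omega
  have h1 : digProd (n / 5) ≤ S (n / 5) := digProd_le_S _ hq1
  have h2 : 1 ≤ S (n / 5) := S_pos _ hq1
  have h3 : n % 5 * digProd (n / 5) ≤ 4 * digProd (n / 5) :=
    Nat.mul_le_mul_right _ (by omega)
  omega
end
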